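/- Let ε > 0 and suppose h ∈ ℂ^k satisfies |h_i| < ε for all i, and A ∈ GL(k+1,ℂ) has (1,1)-entry 1 and ‖A − Id‖ < ε. If ε is small enough (depending only on k), then the normalized map Ḡ_h(A) = (1 + Σ_{i=2}^{k+1} a_{1,i} h_{i-1})^{-1} A G_h satisfies ‖Ḡ_h(A) − Id‖ ≤ C(‖A − Id‖ + ‖h‖) for a constant C depending only on k. -/

import Mathlib

/-!
Write `A = 1 + a` and `G_h = 1 + g`. Here `g` is the rank-one matrix `(0, h) e₀ᵀ`, so
`‖g‖ ≤ ‖h‖`, and the normalizing scalar is `1 + s` with `s = (a g)₀₀`, so `|s| ≤ ‖a‖ ‖g‖`.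
Then `(1 + s)⁻¹ (1 + a)(1 + g) - 1 = (1 + s)⁻¹ (a g + a + g - s)`, and once `‖a‖ ≤ 1/2` and
`‖g‖ ≤ 1` this is at most `4 (‖a‖ + ‖g‖)`, an estimate valid in any normed algebra.
-/

open Matrix
open scoped Matrix.Norms.L2Operator

/-- The shear matrix `G_h`: 1's on the diagonal, first column `(1, h_1, …, h_k)ᵀ`,
zeros elsewhere. -/
def Gmat (k : ℕ) (h : Fin k → ℂ) : Matrix (Fin (k + 1)) (Fin (k + 1)) ℂ :=
  Matrix.of fun i j =>
    if i = j then 1 else if j = 0 then (if hi : i = 0 then 0 else h (i.pred hi)) else 0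

lemma norm_inv_smul_one_add_mul_one_add_sub_one_le {𝕜 R : Type*} [NormedField 𝕜] [NormedRing R]
    [NormedAlgebra 𝕜 R] [NormOneClass R] {a g : R} {s : 𝕜} (ha : ‖a‖ ≤ 1 / 2)
    (hg : ‖g‖ ≤ 1) (hs : ‖s‖ ≤ ‖a‖ * ‖g‖) :
    ‖(1 + s)⁻¹ • ((1 + a) * (1 + g)) - 1‖ ≤ 4 * (‖a‖ + ‖g‖) := by
  have hag : ‖a‖ * ‖g‖ ≤ ‖g‖ / 2 := by nlinarith [norm_nonneg g]
  have hs_half : ‖s‖ ≤ 1 / 2 := by nlinarith [norm_nonneg a]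
  have h_one_add : 1 / 2 ≤ ‖1 + s‖ := by
    have := norm_sub_norm_le (1 : 𝕜) (-s)
    rw [norm_one, norm_neg, sub_neg_eq_add] at this
    linarith
  have hne : 1 + s ≠ 0 := norm_pos_iff.mp (by linarith)
  have hinv : ‖(1 + s)⁻¹‖ ≤ 2 := by
    rw [norm_inv]
    exact inv_le_of_inv_le₀ (by norm_num) (by linarith)
  have hexpand :
      (1 + s)⁻¹ • ((1 + a) * (1 + g)) - 1 = (1 + s)⁻¹ • (a * g + a + g - s • 1) := by
    calc (1 + s)⁻¹ • ((1 + a) * (1 + g)) - 1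
        = (1 + s)⁻¹ • ((1 + a) * (1 + g) - (1 + s) • 1) := by
          rw [smul_sub, smul_smul, inv_mul_cancel₀ hne, one_smul]
      _ = (1 + s)⁻¹ • (a * g + a + g - s • 1) := by
          rw [add_smul, one_smul, mul_add, add_mul, add_mul, one_mul, mul_one, one_mul]
          abel_nf
  have hrest : ‖a * g + a + g - s • (1 : R)‖ ≤ ‖a‖ * ‖g‖ + ‖a‖ + ‖g‖ + ‖s‖ := by
    grw [norm_sub_le, norm_add_le, norm_add_le, norm_mul_le, norm_smul, norm_one, mul_one]
  rw [hexpand, norm_smul]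
  calc ‖(1 + s)⁻¹‖ * ‖a * g + a + g - s • (1 : R)‖
      ≤ 2 * (‖a‖ * ‖g‖ + ‖a‖ + ‖g‖ + ‖s‖) := by gcongr
    _ ≤ 4 * (‖a‖ + ‖g‖) := by nlinarith [norm_nonneg a]

lemma EuclideanSpace.norm_le_card_mul {𝕜 ι : Type*} [RCLike 𝕜] [Fintype ι]
    {x : EuclideanSpace 𝕜 ι} {δ : ℝ} (hx : ∀ i, ‖x i‖ ≤ δ) : ‖x‖ ≤ Fintype.card ι * δ := by
  classical
  calc ‖x‖ = ‖∑ i, EuclideanSpace.single i (x i)‖ := by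
        congr
        ext j
        simp
    _ ≤ ∑ i, ‖x i‖ := by
        grw [norm_sum_le]
        simp
    _ ≤ Fintype.card ι * δ := by
        grw [Finset.sum_le_sum fun i _ => hx i]
        simp

lemma Matrix.norm_apply_le_l2_opNorm {𝕜 m n : Type*} [RCLike 𝕜] [Fintype m] [Fintype n]
    [DecidableEq n] (A : Matrix m n 𝕜) (i : m) (j : n) : ‖A i j‖ ≤ ‖A‖ := by
  have hcol :
      ((EuclideanSpace.equiv m 𝕜).symm (A *ᵥ EuclideanSpace.single j (1 : 𝕜))) i = A i j := by
    simp [EuclideanSpace.equiv]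
  calc ‖A i j‖ ≤ ‖A‖ * ‖EuclideanSpace.single j (1 : 𝕜)‖ := by
        rw [← hcol]
        exact (PiLp.norm_apply_le _ i).trans (A.l2_opNorm_mulVec _)
    _ = ‖A‖ := by rw [PiLp.norm_single, norm_one, mul_one]

lemma sub_one_mul_Gmat_sub_one_apply_zero_zero {k : ℕ}
    (A : Matrix (Fin (k + 1)) (Fin (k + 1)) ℂ) (h : Fin k → ℂ) :
    ((A - 1) * (Gmat k h - 1)) 0 0 = ∑ i : Fin k, A 0 i.succ * h i := by
  simp [Matrix.mul_apply, Fin.sum_univ_succ, Gmat, Matrix.one_apply,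
    (Fin.succ_ne_zero _).symm]

lemma Gmat_sub_one_mulVec {k : ℕ} (h : Fin k → ℂ) (x : Fin (k + 1) → ℂ) :
    (Gmat k h - 1) *ᵥ x = x 0 • Fin.cons 0 h := by
  ext i
  cases i using Fin.cases <;>
    simp [Matrix.mulVec, dotProduct, Fin.sum_univ_succ, Gmat, Matrix.one_apply, Fin.succ_ne_zero,
      mul_comm]

lemma norm_Gmat_sub_one_le {k : ℕ} (h : EuclideanSpace ℂ (Fin k)) : ‖Gmat k h - 1‖ ≤ ‖h‖ := by
  rw [cstar_norm_def]
  refine ContinuousLinearMap.opNorm_le_bound _ (norm_nonneg _) fun x => ?_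
  have hcons : ‖WithLp.toLp 2 (Fin.cons 0 h.ofLp : Fin (k + 1) → ℂ)‖ = ‖h‖ := by
    simp [EuclideanSpace.norm_eq, Fin.sum_univ_succ]
  have hx :
      toEuclideanCLM (𝕜 := ℂ) (Gmat k h - 1) x = x 0 • WithLp.toLp 2 (Fin.cons 0 h.ofLp) := by
    rw [← WithLp.toLp_ofLp (p := 2) (toEuclideanCLM (𝕜 := ℂ) (Gmat k h - 1) x),
      ofLp_toEuclideanCLM, Gmat_sub_one_mulVec, WithLp.toLp_smul]
  rw [hx, norm_smul, hcons, mul_comm]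
  gcongr
  exact PiLp.norm_apply_le x 0

/-- For `ε` small enough (depending only on `k`), whenever `|h_i| < ε` for all `i` and
`A ∈ GL(k+1,ℂ)` has `(1,1)`-entry `1` and `‖A − Id‖ < ε`, the normalized map
`Ḡ_h(A) = (1 + Σ a_{1,i} h_{i-1})⁻¹ • (A · G_h)` satisfies
`‖Ḡ_h(A) − Id‖ ≤ C (‖A − Id‖ + ‖h‖)` for a constant `C` depending only on `k`. -/
theorem normalized_shear_close_to_id (k : ℕ) :
    ∃ ε > (0 : ℝ), ∃ C > (0 : ℝ),
      ∀ h : EuclideanSpace ℂ (Fin k), (∀ i, ‖h i‖ < ε) →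
        ∀ A : Matrix (Fin (k + 1)) (Fin (k + 1)) ℂ, IsUnit A → A 0 0 = 1 → ‖A - 1‖ < ε →
          ‖(1 + ∑ i : Fin k, A 0 i.succ * h i)⁻¹ • (A * Gmat k h) - 1‖ ≤
            C * (‖A - 1‖ + ‖h‖) := by
  refine ⟨1 / (k + 2), by positivity, 4, by norm_num, fun h hh A _ _ hA => ?_⟩
  have hk : (0 : ℝ) ≤ k := k.cast_nonneg
  have hA_le : ‖A - 1‖ ≤ 1 / 2 := hA.le.trans (one_div_le_one_div_of_le two_pos (by linarith))
  have hh_le : ‖h‖ ≤ 1 := by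
    refine (EuclideanSpace.norm_le_card_mul fun i => (hh i).le).trans ?_
    rw [Fintype.card_fin, mul_one_div, div_le_one (by positivity)]
    linarith
  have hG_le : ‖Gmat k h - 1‖ ≤ 1 := (norm_Gmat_sub_one_le h).trans hh_le
  have hs : ‖∑ i : Fin k, A 0 i.succ * h i‖ ≤ ‖A - 1‖ * ‖Gmat k h - 1‖ := by
    rw [← sub_one_mul_Gmat_sub_one_apply_zero_zero]
    exact (norm_apply_le_l2_opNorm _ 0 0).trans (l2_opNorm_mul _ _)
  calc ‖(1 + ∑ i : Fin k, A 0 i.succ * h i)⁻¹ • (A * Gmat k h) - 1‖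
      ≤ 4 * (‖A - 1‖ + ‖Gmat k h - 1‖) := by
        simpa using norm_inv_smul_one_add_mul_one_add_sub_one_le hA_le hG_le hs
    _ ≤ 4 * (‖A - 1‖ + ‖h‖) := by grw [norm_Gmat_sub_one_le]
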